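/- arXiv:2310.00589 — 2 statements merged into one kernel-verified Lean document; each statement's English description precedes it below -/
import Mathlib

section
/- Let Λ be an index set, let D^{(0)} := B_Λ, and let G^{(0)} := G(B_Λ). Then for every i ≥ 0, the i-th derived distribution is exactly the pattern subspace read off from the i-th transitive closure: D^{(i)} = span({Ω̃_{pq} : {p,q} is a solid edge of G^{(i)}} ∪ {E_{k,n+1} : {k,n+1} is a broken edge of G^{(i)}}). -/
open Matrix

attribute [local instance] LieRing.ofAssociativeRing

/-!
Common setup: real (n+1)×(n+1) matrices (rows/columns indexed by `Fin (n+1)`,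
where index `i : Fin n` cast via `Fin.castSucc` plays the role of `i ∈ {1,…,n}`
and `Fin.last n` plays the role of the index `n+1`), the Lie bracket
`⁅A,B⁆ = A*B - B*A`, the matrices `Ω̃_{ij}` and `E_{k,n+1}`, the Lie algebra
`se(n)`, index sets `Λ`, pattern subspaces `B_Λ`, graphs with solid/broken
edges, the one-step transitive closure, and derived distributions.
-/

/-- The ambient space of real (n+1)×(n+1) matrices. -/
abbrev Mat (n : ℕ) := Matrix (Fin (n + 1)) (Fin (n + 1)) ℝ

/-- `Ω̃_{ij}`: 1 in entry (i,j), −1 in entry (j,i), 0 elsewhere (indices among 1,…,n). -/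
def Omega {n : ℕ} (i j : Fin n) : Mat n :=
  Matrix.single i.castSucc j.castSucc 1 - Matrix.single j.castSucc i.castSucc 1

/-- `E_{k,n+1}`: 1 in entry (k, n+1), 0 elsewhere. -/
def Ecol {n : ℕ} (k : Fin n) : Mat n :=
  Matrix.single k.castSucc (Fin.last n) 1

/-- The set se(n): matrices whose (n+1)-th row is zero and with
`M(i,j) = −M(j,i)` for all 1 ≤ i,j ≤ n. -/
def seSet (n : ℕ) : Set (Mat n) :=
  {M | (∀ j, M (Fin.last n) j = 0) ∧
    ∀ i j : Fin n, M i.castSucc j.castSucc = - M j.castSucc i.castSucc}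

/-- se(n) as a real subspace of the (n+1)×(n+1) matrices. -/
def seL (n : ℕ) : Submodule ℝ (Mat n) where
  carrier := seSet n
  add_mem' := by
    rintro a b ⟨ha1, ha2⟩ ⟨hb1, hb2⟩
    refine ⟨fun j => ?_, fun i j => ?_⟩
    · simp [Matrix.add_apply, ha1 j, hb1 j]
    · simp only [Matrix.add_apply, ha2 i j, hb2 i j]; ring
  zero_mem' := by
    refine ⟨fun j => ?_, fun i j => ?_⟩ <;> simp
  smul_mem' := by
    rintro c a ⟨ha1, ha2⟩
    refine ⟨fun j => ?_, fun i j => ?_⟩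
    · simp [Matrix.smul_apply, ha1 j]
    · simp only [Matrix.smul_apply, ha2 i j, smul_neg]

/-- Kronecker delta (real-valued). -/
def kron {n : ℕ} (p q : Fin n) : ℝ := if p = q then 1 else 0

/-- An index set Λ: a set of pairs (p,q) with p < q, i.e. a subset of
`{(i,j) : 1 ≤ i < j ≤ n} ∪ {(k, n+1) : 1 ≤ k ≤ n}`. -/
def IndexSet {n : ℕ} (Λ : Set (Fin (n + 1) × Fin (n + 1))) : Prop :=
  ∀ e ∈ Λ, e.1 < e.2

/-- The generating set `{Ω̃_{ij} : (i,j) ∈ Λ, j ≤ n} ∪ {E_{k,n+1} : (k,n+1) ∈ Λ}`. -/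
def genSet {n : ℕ} (Λ : Set (Fin (n + 1) × Fin (n + 1))) : Set (Mat n) :=
  {M | (∃ i j : Fin n, (i.castSucc, j.castSucc) ∈ Λ ∧ M = Omega i j) ∨
    (∃ k : Fin n, (k.castSucc, Fin.last n) ∈ Λ ∧ M = Ecol k)}

/-- The pattern subspace `B_Λ`. -/
def BLam {n : ℕ} (Λ : Set (Fin (n + 1) × Fin (n + 1))) : Submodule ℝ (Mat n) :=
  Submodule.span ℝ (genSet Λ)

/-- `B_Λ` generates `se(n)` as a Lie algebra: the smallest real subspace containing
`B_Λ` and closed under the bracket (i.e. the Lie subalgebra generated by `B_Λ`)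
equals `se(n)`. -/
def GeneratesSE (n : ℕ) (Λ : Set (Fin (n + 1) × Fin (n + 1))) : Prop :=
  (LieSubalgebra.lieSpan ℝ (Mat n) (BLam Λ : Set (Mat n)) : Set (Mat n)) = seSet n

/-- A graph on vertices {1,…,n+1} recorded by its solid and broken adjacency relations. -/
structure SBGraph (n : ℕ) where
  solid : Fin (n + 1) → Fin (n + 1) → Prop
  broken : Fin (n + 1) → Fin (n + 1) → Prop

/-- A well-formed solid/broken graph: simple and symmetric; solid edges have both
endpoints among 1,…,n, broken edges have one endpoint equal to n+1. -/
def SBGraph.Good {n : ℕ} (G : SBGraph n) : Prop :=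
  (∀ p q, G.solid p q → G.solid q p) ∧ (∀ p q, G.solid p q → p ≠ q) ∧
  (∀ p q, G.solid p q → p ≠ Fin.last n ∧ q ≠ Fin.last n) ∧
  (∀ p q, G.broken p q → G.broken q p) ∧ (∀ p q, G.broken p q → p ≠ q) ∧
  (∀ p q, G.broken p q → p = Fin.last n ∨ q = Fin.last n)

/-- The one-step closure: for distinct vertices i,j,k, add a solid edge {i,k} whenever
{i,j} and {j,k} are both solid, and a broken edge {i,k} whenever one of {i,j},{j,k} is
solid and the other is broken (nothing is added when both are broken). -/
def SBGraph.step {n : ℕ} (G : SBGraph n) : SBGraph n where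
  solid := fun i k => G.solid i k ∨
    (∃ j, i ≠ j ∧ j ≠ k ∧ i ≠ k ∧ G.solid i j ∧ G.solid j k)
  broken := fun i k => G.broken i k ∨
    (∃ j, i ≠ j ∧ j ≠ k ∧ i ≠ k ∧
      ((G.solid i j ∧ G.broken j k) ∨ (G.broken i j ∧ G.solid j k)))

/-- The l-th transitive closure `G^{(l)}`. -/
def SBGraph.closure {n : ℕ} (G : SBGraph n) (l : ℕ) : SBGraph n :=
  (fun H => SBGraph.step H)^[l] G

/-- `G` is the complete graph on the n+1 vertices: every pair of distinct vertices
is joined by a (solid or broken) edge. -/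
def SBGraph.IsComplete {n : ℕ} (G : SBGraph n) : Prop :=
  ∀ p q : Fin (n + 1), p ≠ q → G.solid p q ∨ G.broken p q

/-- The graph `G(B_Λ)` associated with a pattern: solid edges {i,j} for (i,j) ∈ Λ with
j ≤ n, broken edges {k,n+1} for (k,n+1) ∈ Λ. -/
def patternGraph {n : ℕ} (Λ : Set (Fin (n + 1) × Fin (n + 1))) : SBGraph n where
  solid := fun p q => ∃ i j : Fin n, (i.castSucc, j.castSucc) ∈ Λ ∧
    ((p = i.castSucc ∧ q = j.castSucc) ∨ (p = j.castSucc ∧ q = i.castSucc))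
  broken := fun p q => ∃ k : Fin n, (k.castSucc, Fin.last n) ∈ Λ ∧
    ((p = k.castSucc ∧ q = Fin.last n) ∨ (p = Fin.last n ∧ q = k.castSucc))

/-- One step of the derived-distribution construction:
`D ↦ D + span{[A₁,A₂] : A₁,A₂ ∈ D}`. -/
def derivedStep {n : ℕ} (D : Submodule ℝ (Mat n)) : Submodule ℝ (Mat n) :=
  D ⊔ Submodule.span ℝ {M | ∃ A B, A ∈ D ∧ B ∈ D ∧ M = A * B - B * A}

/-- The i-th derived distribution `D^{(i)}`. -/
def derivedIter {n : ℕ} (D : Submodule ℝ (Mat n)) (i : ℕ) : Submodule ℝ (Mat n) :=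
  (fun S => derivedStep S)^[i] D

/-!
The commutators of the edge matrices are
`[Ω̃_pq, Ω̃_rs] = δ_qr Ω̃_ps - δ_pr Ω̃_qs - δ_qs Ω̃_pr + δ_ps Ω̃_qr`,
`[Ω̃_pq, E_k] = δ_qk E_p - δ_pk E_q` and `[E_k, E_l] = 0`: the bracket of two edge matrices is a
combination of the matrices of the edges obtained by concatenating two adjacent edges, solid with
solid giving a solid edge and solid with broken a broken one. As the bracket is bilinear,
`D ↦ D + [D, D]` therefore maps the span of the edge matrices of a graph to the span of the edge
matrices of its one-step closure, and the theorem follows by induction, carrying along the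
invariant that solid edges are symmetric and never reach the vertex `n + 1`.
-/

theorem Matrix.single_mul_single_eq_ite {l m o α : Type*} [Fintype m] [DecidableEq l]
    [DecidableEq m] [DecidableEq o] [NonUnitalNonAssocSemiring α]
    (i : l) (j k : m) (o' : o) (c d : α) :
    Matrix.single i j c * Matrix.single k o' d =
      if j = k then Matrix.single i o' (c * d) else 0 := by
  split_ifs with h
  · subst h; exact single_mul_single_same c i j o' d
  · exact single_mul_single_of_ne c i j k h d

theorem Submodule.span_commutators_span {R A : Type*} [CommSemiring R] [Ring A] [Algebra R A]
    (S : Set A) :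
    span R {M | ∃ a b, a ∈ span R S ∧ b ∈ span R S ∧ M = a * b - b * a} =
      span R (Set.image2 (fun a b => a * b - b * a) S S) := by
  let c : A →ₗ[R] A →ₗ[R] A := LinearMap.mul R A - (LinearMap.mul R A).flip
  have hc : ∀ a b, c a b = a * b - b * a := fun _ _ => rfl
  have hspan := map₂_span_span R c S S
  simp only [hc] at hspan
  rw [← hspan, map₂_eq_span_image2]
  congr 1
  ext M
  simp [hc, eq_comm]

section Generators

variable {n : ℕ}

lemma kron_smul {V : Type*} [AddCommMonoid V] [Module ℝ V] (x y : Fin n) (v : V) :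
    kron x y • v = if x = y then v else 0 := by
  unfold kron; split_ifs <;> simp

lemma Omega_self (p : Fin n) : Omega p p = 0 := sub_self _

lemma Omega_swap (p q : Fin n) : Omega q p = -Omega p q := (neg_sub _ _).symm

lemma Omega_commutator_Omega (p q r s : Fin n) :
    Omega p q * Omega r s - Omega r s * Omega p q =
      kron q r • Omega p s - kron p r • Omega q s - kron q s • Omega p r +
        kron p s • Omega q r := by
  simp only [Omega, sub_mul, mul_sub, single_mul_single_eq_ite, mul_one, kron_smul,
    Fin.castSucc_inj]
  split_ifs <;> subst_vars <;> first | abel1 | simp_all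

lemma Omega_commutator_Ecol (p q k : Fin n) :
    Omega p q * Ecol k - Ecol k * Omega p q = kron q k • Ecol p - kron p k • Ecol q := by
  simp only [Omega, Ecol, sub_mul, mul_sub, single_mul_single_eq_ite, mul_one, kron_smul,
    Fin.castSucc_inj, (Fin.castSucc_lt_last _).ne', if_false]
  split_ifs <;> subst_vars <;> simp

lemma Ecol_commutator_Ecol (k l : Fin n) : Ecol k * Ecol l - Ecol l * Ecol k = 0 := by
  simp [Ecol, (Fin.castSucc_lt_last _).ne']

lemma kron_smul_mem {V : Type*} [AddCommMonoid V] [Module ℝ V] {T : Submodule ℝ V}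
    {x y : Fin n} {v : V} (h : x = y → v ∈ T) : kron x y • v ∈ T := by
  rw [kron_smul]
  split_ifs with hxy
  · exact h hxy
  · exact zero_mem _

end Generators

namespace SBGraph

variable {n : ℕ}

def generators (G : SBGraph n) : Set (Mat n) :=
  {M | ∃ p q : Fin n, G.solid p.castSucc q.castSucc ∧ M = Omega p q} ∪
  {M | ∃ k : Fin n, G.broken k.castSucc (Fin.last n) ∧ M = Ecol k}

lemma Omega_mem_generators {G : SBGraph n} {p q : Fin n} (h : G.solid p.castSucc q.castSucc) :
    Omega p q ∈ G.generators :=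
  Or.inl ⟨p, q, h, rfl⟩

lemma Ecol_mem_generators {G : SBGraph n} {k : Fin n} (h : G.broken k.castSucc (Fin.last n)) :
    Ecol k ∈ G.generators :=
  Or.inr ⟨k, h, rfl⟩

lemma Omega_mem_span_step {G : SBGraph n} {p q s : Fin n}
    (hpq : G.solid p.castSucc q.castSucc) (hqs : G.solid q.castSucc s.castSucc) :
    Omega p s ∈ Submodule.span ℝ G.step.generators := by
  rcases eq_or_ne p s with rfl | hps
  · rw [Omega_self]; exact zero_mem _
  rcases eq_or_ne p q with rfl | hp
  · exact Submodule.subset_span (Omega_mem_generators (Or.inl hqs))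
  rcases eq_or_ne q s with rfl | hq
  · exact Submodule.subset_span (Omega_mem_generators (Or.inl hpq))
  have hinj := Fin.castSucc_injective n
  exact Submodule.subset_span (Omega_mem_generators
    (Or.inr ⟨q.castSucc, hinj.ne hp, hinj.ne hq, hinj.ne hps, hpq, hqs⟩))

lemma Ecol_mem_span_step {G : SBGraph n} {p q : Fin n}
    (hpq : G.solid p.castSucc q.castSucc) (hq : G.broken q.castSucc (Fin.last n)) :
    Ecol p ∈ Submodule.span ℝ G.step.generators := by
  rcases eq_or_ne p q with rfl | hp
  · exact Submodule.subset_span (Ecol_mem_generators (Or.inl hq))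
  exact Submodule.subset_span (Ecol_mem_generators (Or.inr ⟨q.castSucc,
    (Fin.castSucc_injective n).ne hp, (Fin.castSucc_lt_last q).ne, (Fin.castSucc_lt_last p).ne,
    Or.inl ⟨hpq, hq⟩⟩))

lemma commutator_mem_span_step {G : SBGraph n} (hsymm : ∀ ⦃p q⦄, G.solid p q → G.solid q p)
    {a b : Mat n} (ha : a ∈ G.generators) (hb : b ∈ G.generators) :
    a * b - b * a ∈ Submodule.span ℝ G.step.generators := by
  rcases ha with ⟨p, q, hpq, rfl⟩ | ⟨k, hk, rfl⟩ <;>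
    rcases hb with ⟨r, s, hrs, rfl⟩ | ⟨l, hl, rfl⟩
  · rw [Omega_commutator_Omega]
    refine add_mem (sub_mem (sub_mem ?_ ?_) ?_) ?_ <;> refine kron_smul_mem ?_ <;> rintro rfl
    · exact Omega_mem_span_step hpq hrs
    · exact Omega_mem_span_step (hsymm hpq) hrs
    · exact Omega_mem_span_step hpq (hsymm hrs)
    · exact Omega_mem_span_step (hsymm hpq) (hsymm hrs)
  · rw [Omega_commutator_Ecol]
    refine sub_mem ?_ ?_ <;> refine kron_smul_mem ?_ <;> rintro rfl
    · exact Ecol_mem_span_step hpq hl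
    · exact Ecol_mem_span_step (hsymm hpq) hl
  · rw [← neg_sub, Omega_commutator_Ecol]
    refine neg_mem (sub_mem ?_ ?_) <;> refine kron_smul_mem ?_ <;> rintro rfl
    · exact Ecol_mem_span_step hrs hk
    · exact Ecol_mem_span_step (hsymm hrs) hk
  · rw [Ecol_commutator_Ecol]
    exact zero_mem _

lemma generators_step_subset {G : SBGraph n} (hlast : ∀ p, ¬ G.solid p (Fin.last n)) :
    G.step.generators ⊆
      G.generators ∪ Set.image2 (fun a b => a * b - b * a) G.generators G.generators := by
  rintro M (⟨p, q, hpq | ⟨j, hpj, hjq, -, h1, h2⟩, rfl⟩ | ⟨k, hk | ⟨j, hkj, -, -, hj⟩, rfl⟩)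
  · exact Or.inl (Omega_mem_generators hpq)
  · obtain ⟨m, rfl⟩ := Fin.exists_castSucc_eq.mpr
      (show j ≠ Fin.last n by rintro rfl; exact hlast _ h1)
    refine Or.inr ⟨_, Omega_mem_generators h1, _, Omega_mem_generators h2, ?_⟩
    dsimp only
    rw [Omega_commutator_Omega, kron_smul, kron_smul, kron_smul, kron_smul, if_pos rfl,
      if_neg (by simpa using hpj), if_neg (by simpa using hjq), Omega_self]
    simp
  · exact Or.inl (Ecol_mem_generators hk)
  · rcases hj with ⟨h1, h2⟩ | ⟨-, h2⟩
    · obtain ⟨m, rfl⟩ := Fin.exists_castSucc_eq.mpr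
        (show j ≠ Fin.last n by rintro rfl; exact hlast _ h1)
      refine Or.inr ⟨_, Omega_mem_generators h1, _, Ecol_mem_generators h2, ?_⟩
      dsimp only
      rw [Omega_commutator_Ecol, kron_smul, kron_smul, if_pos rfl,
        if_neg (by simpa using hkj)]
      simp
    · exact absurd h2 (hlast j)

lemma derivedStep_span_generators {G : SBGraph n} (hsymm : ∀ ⦃p q⦄, G.solid p q → G.solid q p)
    (hlast : ∀ p, ¬ G.solid p (Fin.last n)) :
    derivedStep (Submodule.span ℝ G.generators) = Submodule.span ℝ G.step.generators := by
  rw [derivedStep, Submodule.span_commutators_span, ← Submodule.span_union]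
  apply le_antisymm
  · rw [Submodule.span_le]
    rintro M (hM | ⟨a, ha, b, hb, rfl⟩)
    · rcases hM with ⟨p, q, h, rfl⟩ | ⟨k, h, rfl⟩
      · exact Submodule.subset_span (Omega_mem_generators (Or.inl h))
      · exact Submodule.subset_span (Ecol_mem_generators (Or.inl h))
    · exact commutator_mem_span_step hsymm ha hb
  · exact Submodule.span_mono (generators_step_subset hlast)

lemma step_solid_symm {G : SBGraph n} (hsymm : ∀ ⦃p q⦄, G.solid p q → G.solid q p) :
    ∀ ⦃p q⦄, G.step.solid p q → G.step.solid q p := by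
  rintro p q (h | ⟨j, hpj, hjq, hpq, h1, h2⟩)
  · exact Or.inl (hsymm h)
  · exact Or.inr ⟨j, hjq.symm, hpj.symm, hpq.symm, hsymm h2, hsymm h1⟩

lemma step_not_solid_last {G : SBGraph n} (hlast : ∀ p, ¬ G.solid p (Fin.last n)) :
    ∀ p, ¬ G.step.solid p (Fin.last n) := by
  rintro p (h | ⟨j, -, -, -, -, h⟩) <;> exact hlast _ h

lemma closure_succ (G : SBGraph n) (l : ℕ) : G.closure (l + 1) = (G.closure l).step :=
  Function.iterate_succ_apply' _ l G

lemma closure_solid_symm {G : SBGraph n} (hsymm : ∀ ⦃p q⦄, G.solid p q → G.solid q p) (l : ℕ) :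
    ∀ ⦃p q⦄, (G.closure l).solid p q → (G.closure l).solid q p := by
  induction l with
  | zero => exact hsymm
  | succ l ih => rw [closure_succ]; exact step_solid_symm ih

lemma closure_not_solid_last {G : SBGraph n} (hlast : ∀ p, ¬ G.solid p (Fin.last n)) (l : ℕ) :
    ∀ p, ¬ (G.closure l).solid p (Fin.last n) := by
  induction l with
  | zero => exact hlast
  | succ l ih => rw [closure_succ]; exact step_not_solid_last ih

end SBGraph

section PatternGraph

variable {n : ℕ}

lemma patternGraph_solid_symm (Λ : Set (Fin (n + 1) × Fin (n + 1))) :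
    ∀ ⦃p q⦄, (patternGraph Λ).solid p q → (patternGraph Λ).solid q p := by
  rintro p q ⟨i, j, h, hpq⟩
  exact ⟨i, j, h, hpq.symm.imp And.symm And.symm⟩

lemma patternGraph_not_solid_last (Λ : Set (Fin (n + 1) × Fin (n + 1))) :
    ∀ p, ¬ (patternGraph Λ).solid p (Fin.last n) := by
  rintro p ⟨i, j, -, ⟨-, h⟩ | ⟨-, h⟩⟩ <;> exact (Fin.castSucc_lt_last _).ne' h

lemma BLam_eq_span_generators (Λ : Set (Fin (n + 1) × Fin (n + 1))) :
    BLam Λ = Submodule.span ℝ (patternGraph Λ).generators := by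
  apply le_antisymm <;> rw [BLam, Submodule.span_le]
  · rintro M (⟨i, j, h, rfl⟩ | ⟨k, h, rfl⟩)
    · exact Submodule.subset_span (Or.inl ⟨i, j, ⟨i, j, h, Or.inl ⟨rfl, rfl⟩⟩, rfl⟩)
    · exact Submodule.subset_span (Or.inr ⟨k, ⟨k, h, Or.inl ⟨rfl, rfl⟩⟩, rfl⟩)
  · rintro M (⟨p, q, ⟨i, j, h, ⟨hp, hq⟩ | ⟨hp, hq⟩⟩, rfl⟩ |
      ⟨k, ⟨l, h, ⟨hk, -⟩ | ⟨hk, -⟩⟩, rfl⟩)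
    · rw [Fin.castSucc_inj] at hp hq
      subst hp hq
      exact Submodule.subset_span (Or.inl ⟨p, q, h, rfl⟩)
    · rw [Fin.castSucc_inj] at hp hq
      subst hp hq
      rw [Omega_swap]
      exact neg_mem (Submodule.subset_span (Or.inl ⟨q, p, h, rfl⟩))
    · rw [Fin.castSucc_inj] at hk
      subst hk
      exact Submodule.subset_span (Or.inr ⟨k, h, rfl⟩)
    · exact absurd hk (Fin.castSucc_lt_last _).ne

end PatternGraph

theorem stmt5_general (n : ℕ) (Λ : Set (Fin (n + 1) × Fin (n + 1))) (i : ℕ) :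
    derivedIter (BLam Λ) i =
      Submodule.span ℝ
        ({M | ∃ p q : Fin n,
            ((patternGraph Λ).closure i).solid p.castSucc q.castSucc ∧ M = Omega p q} ∪
         {M | ∃ k : Fin n,
            ((patternGraph Λ).closure i).broken k.castSucc (Fin.last n) ∧ M = Ecol k}) := by
  induction i with
  | zero => exact BLam_eq_span_generators Λ
  | succ i ih =>
    rw [derivedIter, Function.iterate_succ_apply', ← derivedIter, ih, SBGraph.closure_succ]
    exact SBGraph.derivedStep_span_generators
      (SBGraph.closure_solid_symm (patternGraph_solid_symm Λ) i)
      (SBGraph.closure_not_solid_last (patternGraph_not_solid_last Λ) i)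

/-- For D⁽⁰⁾ = B_Λ and G⁽⁰⁾ = G(B_Λ), the i-th derived distribution
equals the pattern subspace read off from the i-th transitive closure:
`D⁽ⁱ⁾ = span({Ω̃_{pq} : {p,q} solid edge of G⁽ⁱ⁾} ∪ {E_{k,n+1} : {k,n+1} broken edge of G⁽ⁱ⁾})`. -/
theorem stmt5 (n : ℕ) (hn : 1 ≤ n) (Λ : Set (Fin (n + 1) × Fin (n + 1)))
    (hΛ : IndexSet Λ) (i : ℕ) :
    derivedIter (BLam Λ) i =
      Submodule.span ℝ
        ({M | ∃ p q : Fin n,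
            ((patternGraph Λ).closure i).solid p.castSucc q.castSucc ∧ M = Omega p q} ∪
         {M | ∃ k : Fin n,
            ((patternGraph Λ).closure i).broken k.castSucc (Fin.last n) ∧ M = Ecol k}) :=
  stmt5_general n Λ i
end

section
/- Let Λ be an index set. The Lie subalgebra generated by B_Λ (the smallest real subspace containing B_Λ and closed under the bracket) equals se(n) if and only if both of the following hold: the undirected simple graph on vertex set {1,...,n+1} with edge set {{i,j} : (i,j) ∈ Λ} is connected, and the undirected simple graph on vertex set {1,...,n} with edge set {{i,j} : (i,j) ∈ Λ, j ≤ n} is connected. -/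
open Matrix

attribute [local instance] LieRing.ofAssociativeRing

/-!
Sufficiency: along a path i, p, …, j of the inner graph the brackets
`⁅Ω_{ip}, Ω_{pj}⁆ = Ω_{ij}` produce every `Ω_{ij}`, and `⁅Ω_{ij}, E_j⁆ = E_i` spreads the
`E_k` of one edge `{k, n+1}` to all `E_i`; these span se(n).
Necessity: the elements of se(n) whose `(i,j)` entries vanish unless i and j lie in one
component of the inner graph, and whose last column vanishes off the components touching
n+1, form a Lie subalgebra containing `B_Λ`. It contains every `Ω_{ij}` and `E_k` only if
the inner graph is connected and every vertex reaches n+1.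
-/

open SimpleGraph

variable {n : ℕ} {Λ : Set (Fin (n + 1) × Fin (n + 1))}

@[simp]
lemma omega_self (i : Fin n) : Omega i i = 0 := sub_self _

lemma omega_swap (i j : Fin n) : Omega j i = -Omega i j := (neg_sub _ _).symm

lemma omega_apply (i j : Fin n) (a b : Fin (n + 1)) :
    Omega i j a b = (if i.castSucc = a ∧ j.castSucc = b then (1 : ℝ) else 0)
      - (if j.castSucc = a ∧ i.castSucc = b then 1 else 0) := by
  simp [Omega, Matrix.single]

lemma ecol_apply (k : Fin n) (a b : Fin (n + 1)) :
    Ecol k a b = if k.castSucc = a ∧ Fin.last n = b then (1 : ℝ) else 0 := by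
  simp [Ecol, Matrix.single]

lemma omega_mem_seSet (i j : Fin n) : Omega i j ∈ seSet n := by
  refine ⟨fun b => by simp [omega_apply, Fin.castSucc_ne_last], fun a b => ?_⟩
  simp only [omega_apply, neg_sub]
  congr 1 <;> simp [and_comm]

lemma ecol_mem_seSet (k : Fin n) : Ecol k ∈ seSet n :=
  ⟨fun b => by simp [ecol_apply, Fin.castSucc_ne_last],
    fun a b => by simp [ecol_apply, (Fin.castSucc_ne_last _).symm]⟩

lemma lie_omega_omega {i p j : Fin n} (hip : i ≠ p) (hpj : p ≠ j) (hij : i ≠ j) :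
    ⁅Omega i p, Omega p j⁆ = Omega i j := by
  simp [Ring.lie_def, Omega, sub_mul, mul_sub, hip, hpj, hij, hip.symm, hpj.symm, hij.symm]

lemma lie_omega_ecol {i j : Fin n} (hij : i ≠ j) : ⁅Omega i j, Ecol j⁆ = Ecol i := by
  simp [Ring.lie_def, Omega, Ecol, sub_mul, mul_sub, hij, (Fin.castSucc_ne_last _).symm]

lemma mul_apply_of_last_row_eq_zero {A B : Mat n} (hB : ∀ b, B (Fin.last n) b = 0)
    (a b : Fin (n + 1)) : (A * B) a b = ∑ p : Fin n, A a p.castSucc * B p.castSucc b := by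
  simp [Matrix.mul_apply, Fin.sum_univ_castSucc, hB]

lemma mul_apply_castSucc_eq_mul_apply_swap {A B : Mat n} (hA : A ∈ seSet n) (hB : B ∈ seSet n)
    (i j : Fin n) : (A * B) i.castSucc j.castSucc = (B * A) j.castSucc i.castSucc := by
  rw [mul_apply_of_last_row_eq_zero hB.1, mul_apply_of_last_row_eq_zero hA.1]
  refine Finset.sum_congr rfl fun p _ => ?_
  rw [hB.2 j p, hA.2 p i]
  ring

lemma lie_mem_seSet {A B : Mat n} (hA : A ∈ seSet n) (hB : B ∈ seSet n) :
    ⁅A, B⁆ ∈ seSet n := by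
  refine ⟨fun b => ?_, fun i j => ?_⟩
  · simp [Ring.lie_def, Matrix.mul_apply, hA.1, hB.1]
  · rw [Ring.lie_def, Matrix.sub_apply, Matrix.sub_apply,
      mul_apply_castSucc_eq_mul_apply_swap hA hB i j,
      mul_apply_castSucc_eq_mul_apply_swap hB hA i j, neg_sub]

def seLie (n : ℕ) : LieSubalgebra ℝ (Mat n) :=
  { seL n with lie_mem' := lie_mem_seSet }

lemma eq_sum_omega_add_sum_ecol {M : Mat n} (hM : M ∈ seSet n) :
    M = (∑ i : Fin n, ∑ j : Fin n, (M i.castSucc j.castSucc / 2) • Omega i j)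
      + ∑ k : Fin n, M k.castSucc (Fin.last n) • Ecol k := by
  ext a b
  simp only [Matrix.add_apply, Matrix.sum_apply, Matrix.smul_apply, omega_apply, ecol_apply,
    smul_eq_mul]
  induction a using Fin.lastCases with
  | last => simp [Fin.castSucc_ne_last, hM.1]
  | cast i =>
    induction b using Fin.lastCases with
    | last => simp [Fin.castSucc_ne_last]
    | cast j =>
      have hM' : M i.castSucc j.castSucc =
          M i.castSucc j.castSucc / 2 - M j.castSucc i.castSucc / 2 := by
        rw [hM.2 j i]; ring
      simp [(Fin.castSucc_ne_last _).symm, mul_sub, ite_and, Finset.sum_sub_distrib, ← hM']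

lemma seSet_subset_of_omega_mem_of_ecol_mem {K : Submodule ℝ (Mat n)}
    (hΩ : ∀ i j, Omega i j ∈ K) (hE : ∀ k, Ecol k ∈ K) : seSet n ⊆ K := fun M hM => by
  rw [eq_sum_omega_add_sum_ecol hM]
  exact add_mem (sum_mem fun i _ => sum_mem fun j _ => K.smul_mem _ (hΩ i j))
    (sum_mem fun k _ => K.smul_mem _ (hE k))

section Supported

variable (r : Fin n → Fin n → Prop) (S : Set (Fin n))

def SupportedOn (M : Mat n) : Prop :=
  (∀ i j, ¬ r i j → M i.castSucc j.castSucc = 0) ∧ ∀ k ∉ S, M k.castSucc (Fin.last n) = 0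

variable {r S}

lemma SupportedOn.mul (htr : ∀ i p j, r i p → r p j → r i j)
    (hS : ∀ k p, r k p → p ∈ S → k ∈ S)
    {A B : Mat n} (hA : SupportedOn r S A) (hB : SupportedOn r S B)
    (hB0 : ∀ b, B (Fin.last n) b = 0) : SupportedOn r S (A * B) := by
  refine ⟨fun i j hij => ?_, fun k hk => ?_⟩ <;>
    rw [mul_apply_of_last_row_eq_zero hB0] <;> refine Finset.sum_eq_zero fun p _ => ?_
  · by_cases hip : r i p
    · rw [hB.1 p j fun hpj => hij (htr i p j hip hpj), mul_zero]
    · rw [hA.1 i p hip, zero_mul]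
  · by_cases hp : p ∈ S
    · rw [hA.1 k p fun hkp => hk (hS k p hkp hp), zero_mul]
    · rw [hB.2 p hp, mul_zero]

variable (r S)

def supportedSE : Submodule ℝ (Mat n) where
  carrier := {M | M ∈ seSet n ∧ SupportedOn r S M}
  add_mem' := fun ⟨ha, ha1, ha2⟩ ⟨hb, hb1, hb2⟩ => ⟨(seL n).add_mem ha hb,
    fun i j h => by simp [ha1 i j h, hb1 i j h], fun k h => by simp [ha2 k h, hb2 k h]⟩
  zero_mem' := ⟨(seL n).zero_mem, fun _ _ _ => rfl, fun _ _ => rfl⟩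
  smul_mem' := fun c _ ⟨ha, ha1, ha2⟩ => ⟨(seL n).smul_mem c ha,
    fun i j h => by simp [ha1 i j h], fun k h => by simp [ha2 k h]⟩

def supportedLie (htr : ∀ i p j, r i p → r p j → r i j)
    (hS : ∀ k p, r k p → p ∈ S → k ∈ S) : LieSubalgebra ℝ (Mat n) :=
  { supportedSE r S with
    lie_mem' := fun {A B} ⟨hA, hAr⟩ ⟨hB, hBr⟩ => by
      refine ⟨lie_mem_seSet hA hB, ?_⟩
      obtain ⟨hAB1, hAB2⟩ := hAr.mul htr hS hBr hB.1
      obtain ⟨hBA1, hBA2⟩ := hBr.mul htr hS hAr hA.1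
      exact ⟨fun i j h => by simp [Ring.lie_def, hAB1 i j h, hBA1 i j h],
        fun k h => by simp [Ring.lie_def, hAB2 k h, hBA2 k h]⟩ }

end Supported

lemma omega_mem_of_reachable {G : SimpleGraph (Fin n)} {K : LieSubalgebra ℝ (Mat n)}
    (hK : ∀ i j, G.Adj i j → Omega i j ∈ K) {i j : Fin n} (h : G.Reachable i j) :
    Omega i j ∈ K := by
  rw [reachable_iff_reflTransGen] at h
  induction h with
  | refl => simp
  | @tail p j _ hpj ih =>
    by_cases hij : i = j
    · simp [hij]
    by_cases hip' : i = p
    · exact hip' ▸ hK p j hpj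
    rw [← lie_omega_omega hip' hpj.ne hij]
    exact K.lie_mem ih (hK p j hpj)

lemma ecol_mem_of_reachable {G : SimpleGraph (Fin n)} {K : LieSubalgebra ℝ (Mat n)}
    (hK : ∀ i j, G.Adj i j → Omega i j ∈ K) {k k' : Fin n} (h : G.Reachable k k')
    (hk' : Ecol k' ∈ K) : Ecol k ∈ K := by
  by_cases hkk' : k = k'
  · exact hkk' ▸ hk'
  rw [← lie_omega_ecol hkk']
  exact K.lie_mem (omega_mem_of_reachable hK h) hk'

abbrev innerGraph (Λ : Set (Fin (n + 1) × Fin (n + 1))) : SimpleGraph (Fin n) :=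
  fromRel fun i j => (i.castSucc, j.castSucc) ∈ Λ

abbrev fullGraph (Λ : Set (Fin (n + 1) × Fin (n + 1))) : SimpleGraph (Fin (n + 1)) :=
  fromRel fun p q => (p, q) ∈ Λ

abbrev patternLieSpan (Λ : Set (Fin (n + 1) × Fin (n + 1))) : LieSubalgebra ℝ (Mat n) :=
  LieSubalgebra.lieSpan ℝ (Mat n) (BLam Λ : Set (Mat n))

def innerGraphHom (Λ : Set (Fin (n + 1) × Fin (n + 1))) : innerGraph Λ →g fullGraph Λ where
  toFun := Fin.castSucc
  map_rel' h := (fromRel_adj _ _ _).2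
    ⟨Fin.castSucc_injective _ |>.ne h.ne, ((fromRel_adj _ _ _).1 h).2⟩

lemma genSet_subset_patternLieSpan : genSet Λ ⊆ patternLieSpan Λ :=
  Submodule.subset_span.trans LieSubalgebra.subset_lieSpan

lemma omega_mem_patternLieSpan_of_adj {i j : Fin n} (h : (innerGraph Λ).Adj i j) :
    Omega i j ∈ patternLieSpan Λ := by
  rcases ((fromRel_adj _ _ _).1 h).2 with hij | hji
  · exact genSet_subset_patternLieSpan (Or.inl ⟨i, j, hij, rfl⟩)
  · rw [← neg_neg (Omega i j), ← omega_swap]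
    exact neg_mem (genSet_subset_patternLieSpan (Or.inl ⟨j, i, hji, rfl⟩))

lemma patternLieSpan_subset_seSet :
    (patternLieSpan Λ : Set (Mat n)) ⊆ seSet n := by
  refine LieSubalgebra.lieSpan_le (K := seLie n) |>.2 (Submodule.span_le.2 ?_)
  rintro M (⟨i, j, -, rfl⟩ | ⟨k, -, rfl⟩)
  exacts [omega_mem_seSet i j, ecol_mem_seSet k]

lemma exists_castSucc_last_mem (hn : 1 ≤ n) (hΛ : IndexSet Λ) (h : (fullGraph Λ).Connected) :
    ∃ k : Fin n, (k.castSucc, Fin.last n) ∈ Λ := by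
  have : Nontrivial (Fin (n + 1)) := Fin.nontrivial_iff_two_le.2 (by omega)
  obtain ⟨q, hq⟩ := h.preconnected.exists_adj_of_nontrivial (Fin.last n)
  obtain ⟨hne, hlq | hql⟩ := (fromRel_adj _ _ _).1 hq
  · exact absurd (hΛ _ hlq) (Fin.le_last q).not_gt
  · obtain ⟨k, rfl⟩ := Fin.exists_castSucc_eq.2 hne.symm
    exact ⟨k, hql⟩

lemma seSet_subset_patternLieSpan (hn : 1 ≤ n) (hΛ : IndexSet Λ)
    (hfull : (fullGraph Λ).Connected) (hinner : (innerGraph Λ).Connected) :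
    seSet n ⊆ patternLieSpan Λ := by
  have hK : ∀ i j, (innerGraph Λ).Adj i j → Omega i j ∈ patternLieSpan Λ :=
    fun _ _ => omega_mem_patternLieSpan_of_adj
  obtain ⟨k', hk'⟩ := exists_castSucc_last_mem hn hΛ hfull
  refine seSet_subset_of_omega_mem_of_ecol_mem (K := (patternLieSpan Λ).toSubmodule)
    (fun i j => omega_mem_of_reachable hK (hinner.preconnected i j))
    (fun k => ecol_mem_of_reachable hK (hinner.preconnected k k') ?_)
  exact genSet_subset_patternLieSpan (Or.inr ⟨k', hk', rfl⟩)

def linkedToLast (Λ : Set (Fin (n + 1) × Fin (n + 1))) : Set (Fin n) :=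
  {k | ∃ k', (innerGraph Λ).Reachable k k' ∧ (k'.castSucc, Fin.last n) ∈ Λ}

def reachableSupportedLie (Λ : Set (Fin (n + 1) × Fin (n + 1))) : LieSubalgebra ℝ (Mat n) :=
  supportedLie (innerGraph Λ).Reachable (linkedToLast Λ) (fun _ _ _ => Reachable.trans)
    fun _ _ hkp ⟨k', hpk', hk'⟩ => ⟨k', hkp.trans hpk', hk'⟩

lemma patternLieSpan_le_reachableSupportedLie :
    patternLieSpan Λ ≤ reachableSupportedLie Λ := by
  refine LieSubalgebra.lieSpan_le.2 (Submodule.span_le.2 ?_)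
  rintro M (⟨i, j, hij, rfl⟩ | ⟨k, hk, rfl⟩)
  · by_cases hii : i = j
    · subst hii
      rw [omega_self]
      exact zero_mem _
    have hadj : (innerGraph Λ).Adj i j := (fromRel_adj _ _ _).2 ⟨hii, Or.inl hij⟩
    refine ⟨omega_mem_seSet i j, fun a b hab => ?_, fun k _ => by simp [omega_apply]⟩
    simp only [omega_apply, Fin.castSucc_inj]
    rw [if_neg, if_neg, sub_zero]
    · rintro ⟨rfl, rfl⟩; exact hab hadj.symm.reachable
    · rintro ⟨rfl, rfl⟩; exact hab hadj.reachable
  · refine ⟨ecol_mem_seSet k, fun a b _ => by simp [ecol_apply, (Fin.castSucc_ne_last b).symm],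
      fun k' hk' => ?_⟩
    simp only [ecol_apply, Fin.castSucc_inj, and_true]
    rw [if_neg]
    rintro rfl
    exact hk' ⟨k, Reachable.refl _, hk⟩

lemma mem_reachableSupportedLie (h : GeneratesSE n Λ) {M : Mat n} (hM : M ∈ seSet n) :
    M ∈ reachableSupportedLie Λ :=
  patternLieSpan_le_reachableSupportedLie
    (show M ∈ (patternLieSpan Λ : Set (Mat n)) from h ▸ hM)

lemma innerGraph_connected (hn : 1 ≤ n) (h : GeneratesSE n Λ) : (innerGraph Λ).Connected := by
  have : Nonempty (Fin n) := ⟨⟨0, hn⟩⟩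
  refine ⟨fun i j => ?_⟩
  by_contra hij
  have hne : i ≠ j := fun h => hij (h ▸ Reachable.refl _)
  simpa [omega_apply, Fin.castSucc_inj, hne.symm] using
    (mem_reachableSupportedLie h (omega_mem_seSet i j)).2.1 i j hij

lemma fullGraph_connected (h : GeneratesSE n Λ) : (fullGraph Λ).Connected := by
  have hlast : ∀ p, (fullGraph Λ).Reachable p (Fin.last n) := by
    intro p
    induction p using Fin.lastCases with
    | last => rfl
    | cast i =>
      obtain ⟨k', hik', hk'⟩ : i ∈ linkedToLast Λ := by
        by_contra hi
        simpa [ecol_apply] using (mem_reachableSupportedLie h (ecol_mem_seSet i)).2.2 i hi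
      have hadj : (fullGraph Λ).Adj k'.castSucc (Fin.last n) :=
        (fromRel_adj _ _ _).2 ⟨Fin.castSucc_ne_last k', Or.inl hk'⟩
      exact (hik'.map (innerGraphHom Λ)).trans hadj.reachable
  exact ⟨fun p q => (hlast p).trans (hlast q).symm⟩

/-- The Lie subalgebra generated by B_Λ equals se(n) if and only if
the graph on {1,…,n+1} with edge set {{i,j} : (i,j) ∈ Λ} is connected and the graph on
{1,…,n} with edge set {{i,j} : (i,j) ∈ Λ, j ≤ n} is connected. -/
theorem stmt8 (n : ℕ) (hn : 1 ≤ n) (Λ : Set (Fin (n + 1) × Fin (n + 1)))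
    (hΛ : IndexSet Λ) :
    GeneratesSE n Λ ↔
      ((SimpleGraph.fromRel (fun p q : Fin (n + 1) => (p, q) ∈ Λ)).Connected ∧
       (SimpleGraph.fromRel (fun i j : Fin n => (i.castSucc, j.castSucc) ∈ Λ)).Connected) :=
  ⟨fun h => ⟨fullGraph_connected h, innerGraph_connected hn h⟩,
    fun ⟨hfull, hinner⟩ =>
      patternLieSpan_subset_seSet.antisymm
        (seSet_subset_patternLieSpan hn hΛ hfull hinner)⟩
end
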